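/- arXiv:1903.08276 — 5 statements merged into one kernel-verified Lean document; each statement's English description precedes it below -/
import Mathlib

section
/- Let 0 = τ₀ < τ₁ < ⋯ < τ_m = h be real numbers, M₀, …, M_m ∈ ℂ^{n×n}, and let Δ(z) := zI − Σ_{j=0}^m e^{−z τ_j} M_j be the characteristic matrix. Let λ, μ ∈ ℂ with λ ≠ μ, let q ∈ ℂⁿ be a column vector with Δ(μ) q = 0, and let p ∈ ℂ^{1×n} be a row vector with p Δ(λ) = 0. Define g : (0, h] → ℂ^{1×n} by g(θ) := Σ_{j : τ_j ≥ θ} e^{λ(θ − τ_j)} p M_j. Then p·q + ∫₀ʰ g(θ) e^{−μθ} q dθ = 0. -/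
open Matrix MeasureTheory intervalIntegral

private lemma aux_sum_mulVec {k : ℕ} {ι : Type*} (s : Finset ι)
    (A : ι → Matrix (Fin k) (Fin k) ℂ) (q : Fin k → ℂ) :
    (∑ j ∈ s, A j) *ᵥ q = ∑ j ∈ s, A j *ᵥ q :=
  map_sum (Matrix.mulVec.addMonoidHomLeft q) A s

private lemma aux_vecMul_sum {k : ℕ} {ι : Type*} (s : Finset ι)
    (A : ι → Matrix (Fin k) (Fin k) ℂ) (p : Fin k → ℂ) :
    p ᵥ* (∑ j ∈ s, A j) = ∑ j ∈ s, p ᵥ* A j := by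
  funext i
  simp only [Matrix.vecMul, dotProduct, Matrix.sum_apply, Finset.mul_sum,
    Finset.sum_apply]
  exact Finset.sum_comm

private lemma aux_vecMul_smulMat {k : ℕ} (a : ℂ) (A : Matrix (Fin k) (Fin k) ℂ)
    (p : Fin k → ℂ) : p ᵥ* (a • A) = a • (p ᵥ* A) := by
  funext i
  simp only [Matrix.vecMul, dotProduct, Matrix.smul_apply, Pi.smul_apply,
    smul_eq_mul, Finset.mul_sum]
  exact Finset.sum_congr rfl fun x _ => by ring

private lemma aux_dotProduct_sum {k : ℕ} {ι : Type*} (s : Finset ι)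
    (v : ι → Fin k → ℂ) (p : Fin k → ℂ) :
    p ⬝ᵥ (∑ j ∈ s, v j) = ∑ j ∈ s, p ⬝ᵥ v j := by
  simp only [dotProduct, Finset.sum_apply, Finset.mul_sum]
  exact Finset.sum_comm

private lemma aux_sum_dotProduct {k : ℕ} {ι : Type*} (s : Finset ι)
    (v : ι → Fin k → ℂ) (q : Fin k → ℂ) :
    (∑ j ∈ s, v j) ⬝ᵥ q = ∑ j ∈ s, v j ⬝ᵥ q := by
  simp only [dotProduct, Finset.sum_apply, Finset.sum_mul]
  exact Finset.sum_comm

/-- Biorthogonality of eigenfunctions corresponding to distinct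
eigenvalues of the characteristic matrix `Δ(z) = zI − Σⱼ e^{−zτⱼ} Mⱼ`: if
`Δ(μ) q = 0`, `p Δ(λ) = 0` and `λ ≠ μ`, then
`p·q + ∫₀ʰ g(θ) e^{−μθ} q dθ = 0` where `g(θ) = Σ_{j : τⱼ ≥ θ} e^{λ(θ−τⱼ)} p Mⱼ`. -/
theorem pairing_distinct_eigenvalues_eq_zero
    {n m : ℕ} (τ : Fin (m + 1) → ℝ) (h : ℝ)
    (hτ0 : τ 0 = 0) (hτmono : StrictMono τ) (hτlast : τ (Fin.last m) = h)
    (M : Fin (m + 1) → Matrix (Fin n) (Fin n) ℂ)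
    (lam μ : ℂ) (hlamμ : lam ≠ μ) (q : Fin n → ℂ) (p : Fin n → ℂ)
    (hq : ((μ • (1 : Matrix (Fin n) (Fin n) ℂ))
        - ∑ j, Complex.exp (-μ * (τ j : ℂ)) • M j) *ᵥ q = 0)
    (hp : p ᵥ* ((lam • (1 : Matrix (Fin n) (Fin n) ℂ))
        - ∑ j, Complex.exp (-lam * (τ j : ℂ)) • M j) = 0) :
    p ⬝ᵥ q
      + ∫ θ in (0 : ℝ)..h,
          ((∑ j ∈ Finset.univ.filter (fun j => θ ≤ τ j),
              Complex.exp (lam * ((θ : ℂ) - (τ j : ℂ))) • (p ᵥ* M j)) ⬝ᵥ q)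
            * Complex.exp (-μ * (θ : ℂ))
      = 0 := by
  have hne : lam - μ ≠ 0 := sub_ne_zero.mpr hlamμ
  set c : Fin (m + 1) → ℂ := fun j => (p ᵥ* M j) ⬝ᵥ q with hc
  have hτ0le : ∀ j, (0 : ℝ) ≤ τ j := fun j => hτ0 ▸ hτmono.monotone (Fin.zero_le j)
  have hτleh : ∀ j, τ j ≤ h := fun j => hτlast ▸ hτmono.monotone (Fin.le_last j)
  -- spectral identities
  have hμid : ∑ j, Complex.exp (-μ * (τ j : ℂ)) * c j = μ * (p ⬝ᵥ q) := by
    have h1 := congrArg (fun v => p ⬝ᵥ v) hq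
    simp only [sub_mulVec, smul_mulVec, one_mulVec, aux_sum_mulVec,
      dotProduct_sub, dotProduct_smul, aux_dotProduct_sum, dotProduct_zero,
      smul_eq_mul, dotProduct_mulVec, sub_eq_zero] at h1
    simp only [hc]
    exact h1.symm
  have hlid : ∑ j, Complex.exp (-lam * (τ j : ℂ)) * c j = lam * (p ⬝ᵥ q) := by
    have h1 := congrArg (fun v => v ⬝ᵥ q) hp
    simp only [Matrix.vecMul_sub, aux_vecMul_smulMat, Matrix.vecMul_one,
      aux_vecMul_sum, sub_dotProduct, smul_dotProduct, aux_sum_dotProduct,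
      zero_dotProduct, smul_eq_mul, sub_eq_zero] at h1
    simp only [hc]
    exact h1.symm
  -- the piecewise integrand
  set G : Fin (m + 1) → ℝ → ℂ := fun j θ =>
    Complex.exp (lam * ((θ : ℂ) - (τ j : ℂ))) * c j * Complex.exp (-μ * (θ : ℂ)) with hG
  set F : Fin (m + 1) → ℝ → ℂ := fun j θ => if θ ≤ τ j then G j θ else 0 with hF
  have hGcont : ∀ j, Continuous (G j) := by
    intro j
    fun_prop
  have hFint : ∀ j (a b : ℝ), IntervalIntegrable (F j) volume a b := by
    intro j a b
    have hGint : IntervalIntegrable (G j) volume a b := (hGcont j).intervalIntegrable a b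
    rw [intervalIntegrable_iff] at hGint ⊢
    have : F j = (Set.Iic (τ j)).indicator (G j) := by
      funext θ
      simp [hF, Set.indicator_apply, Set.mem_Iic]
    rw [this]
    exact hGint.indicator measurableSet_Iic
  -- rewrite the integrand as a sum of F j
  have hintegrand : (∫ θ in (0 : ℝ)..h,
          ((∑ j ∈ Finset.univ.filter (fun j => θ ≤ τ j),
              Complex.exp (lam * ((θ : ℂ) - (τ j : ℂ))) • (p ᵥ* M j)) ⬝ᵥ q)
            * Complex.exp (-μ * (θ : ℂ)))
      = ∫ θ in (0 : ℝ)..h, ∑ j, F j θ := by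
    apply intervalIntegral.integral_congr
    intro θ _
    dsimp only
    rw [Finset.sum_filter, aux_sum_dotProduct, Finset.sum_mul]
    refine Finset.sum_congr rfl fun j _ => ?_
    by_cases hθj : θ ≤ τ j
    · simp [hF, hG, hθj, smul_dotProduct, smul_eq_mul, hc]
    · simp [hF, hθj]
  rw [hintegrand, intervalIntegral.integral_finset_sum (fun j _ => hFint j 0 h)]
  -- compute each integral
  have hsingle : ∀ j, (∫ θ in (0 : ℝ)..h, F j θ)
      = c j * (Complex.exp (-μ * (τ j : ℂ)) - Complex.exp (-lam * (τ j : ℂ))) / (lam - μ) := by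
    intro j
    have hsplit : (∫ θ in (0 : ℝ)..(τ j), F j θ) + (∫ θ in (τ j)..h, F j θ)
        = ∫ θ in (0 : ℝ)..h, F j θ :=
      intervalIntegral.integral_add_adjacent_intervals (hFint j 0 (τ j)) (hFint j (τ j) h)
    have hright : (∫ θ in (τ j)..h, F j θ) = 0 := by
      rw [intervalIntegral.integral_of_le (hτleh j)]
      rw [MeasureTheory.setIntegral_congr_fun measurableSet_Ioc
        (g := fun _ => (0 : ℂ)) (fun θ hθ => by simp [hF, not_le.mpr hθ.1])]
      simp
    have hleft : (∫ θ in (0 : ℝ)..(τ j), F j θ) = ∫ θ in (0 : ℝ)..(τ j), G j θ := by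
      apply intervalIntegral.integral_congr
      intro θ hθ
      rw [Set.uIcc_of_le (hτ0le j)] at hθ
      simp [hF, hθ.2]
    have hGval : (∫ θ in (0 : ℝ)..(τ j), G j θ)
        = c j * (Complex.exp (-μ * (τ j : ℂ)) - Complex.exp (-lam * (τ j : ℂ))) / (lam - μ) := by
      have hGeq : ∀ θ : ℝ, G j θ
          = (c j * Complex.exp (-lam * (τ j : ℂ))) * Complex.exp ((lam - μ) * (θ : ℂ)) := by
        intro θ
        simp only [hG]
        rw [mul_comm _ (c j), mul_assoc, mul_assoc, ← Complex.exp_add, ← Complex.exp_add]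
        congr 1
        ring
      have heq2 : (∫ θ in (0 : ℝ)..(τ j), G j θ)
          = ∫ θ in (0 : ℝ)..(τ j),
              (c j * Complex.exp (-lam * (τ j : ℂ))) * Complex.exp ((lam - μ) * (θ : ℂ)) := by
        apply intervalIntegral.integral_congr
        intro θ _
        exact hGeq θ
      have key : Complex.exp (-lam * (τ j : ℂ))
          * (Complex.exp ((lam - μ) * (τ j : ℂ))
              - Complex.exp ((lam - μ) * (((0 : ℝ)) : ℂ)))
          = Complex.exp (-μ * (τ j : ℂ)) - Complex.exp (-lam * (τ j : ℂ)) := by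
        rw [Complex.ofReal_zero, mul_zero, Complex.exp_zero, mul_sub, mul_one,
          ← Complex.exp_add]
        ring_nf
      rw [heq2, intervalIntegral.integral_const_mul, integral_exp_mul_complex hne,
        mul_assoc, ← mul_div_assoc, key, mul_div_assoc]
    rw [← hsplit, hright, hleft, hGval, add_zero]
  simp only [hsingle]
  have hsum : ∑ j, c j * (Complex.exp (-μ * (τ j : ℂ)) - Complex.exp (-lam * (τ j : ℂ))) / (lam - μ)
      = (μ * (p ⬝ᵥ q) - lam * (p ⬝ᵥ q)) / (lam - μ) := by
    rw [← Finset.sum_div]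
    congr 1
    rw [← hμid, ← hlid, ← Finset.sum_sub_distrib]
    apply Finset.sum_congr rfl
    intro j _
    ring
  rw [hsum]
  field_simp
  ring_nf
end

section
/- Let V and W be vector spaces over ℂ, let A : V → V and L : W → V be linear maps, and define the linear map 𝔸 : V × W → V × W by 𝔸(v, w) := (A v + L w, 0). Then for every λ ∈ ℂ with λ ≠ 0 and every natural number k ≥ 1, the kernel of (𝔸 − λ·id)ᵏ equals ker((A − λ·id)ᵏ) × {0}. In particular, the generalized eigenspace of 𝔸 at any nonzero λ equals the generalized eigenspace of A at λ, embedded as the first factor. -/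
/-- For the parameter-augmented linear map
`𝔸(v, w) := (A v + L w, 0)` on `V × W` and any `λ ≠ 0` and `k ≥ 1`,
`ker((𝔸 − λ·id)ᵏ) = ker((A − λ·id)ᵏ) × {0}`; in particular the generalized
eigenspace of `𝔸` at any nonzero `λ` is that of `A`, embedded as the first factor. -/
theorem kernel_pow_parameter_augmented
    {V W : Type*} [AddCommGroup V] [Module ℂ V] [AddCommGroup W] [Module ℂ W]
    (A : V →ₗ[ℂ] V) (L : W →ₗ[ℂ] V)
    (𝔸 : V × W →ₗ[ℂ] V × W)
    (h𝔸 : ∀ (v : V) (w : W), 𝔸 (v, w) = (A v + L w, 0)) :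
    ∀ lam : ℂ, lam ≠ 0 →
      (∀ k : ℕ, 1 ≤ k →
        LinearMap.ker ((𝔸 - lam • (1 : V × W →ₗ[ℂ] V × W)) ^ k)
          = (LinearMap.ker ((A - lam • (1 : V →ₗ[ℂ] V)) ^ k)).prod
              (⊥ : Submodule ℂ W)) ∧
      (⨆ k : ℕ, LinearMap.ker ((𝔸 - lam • (1 : V × W →ₗ[ℂ] V × W)) ^ k))
        = (⨆ k : ℕ, LinearMap.ker ((A - lam • (1 : V →ₗ[ℂ] V)) ^ k)).prod
            (⊥ : Submodule ℂ W) := by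
  intro lam hlam
  set B : V × W →ₗ[ℂ] V × W := 𝔸 - lam • (1 : V × W →ₗ[ℂ] V × W) with hB
  set C : V →ₗ[ℂ] V := A - lam • (1 : V →ₗ[ℂ] V) with hC
  -- second component formula
  have hsnd : ∀ (k : ℕ) (x : V × W), ((B ^ k) x).2 = ((-lam) ^ k) • x.2 := by
    intro k
    induction k with
    | zero => intro x; simp
    | succ n ih =>
      intro x
      have hstep : ∀ y : V × W, (B y).2 = (-lam) • y.2 := by
        intro y
        simp only [hB, LinearMap.sub_apply, LinearMap.smul_apply, Module.End.one_apply]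
        have := h𝔸 y.1 y.2
        rw [show (y.1, y.2) = y from rfl] at this
        rw [this]
        simp [neg_smul]
      rw [pow_succ', Module.End.mul_apply, hstep, ih x, smul_smul, ← pow_succ']
  -- first-factor formula
  have hfst : ∀ (k : ℕ) (v : V), (B ^ k) (v, 0) = ((C ^ k) v, 0) := by
    intro k
    induction k with
    | zero => intro v; simp
    | succ n ih =>
      intro v
      have hstep : ∀ u : V, B (u, (0 : W)) = (C u, 0) := by
        intro u
        simp only [hB, hC, LinearMap.sub_apply, LinearMap.smul_apply, Module.End.one_apply,
          h𝔸 u 0]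
        simp [Prod.ext_iff]
      rw [pow_succ', Module.End.mul_apply, ih, hstep]
      rw [pow_succ', Module.End.mul_apply]
  -- pointwise kernel equality for all k
  have hker : ∀ k : ℕ, LinearMap.ker (B ^ k)
      = (LinearMap.ker (C ^ k)).prod (⊥ : Submodule ℂ W) := by
    intro k
    ext x
    simp only [LinearMap.mem_ker, Submodule.mem_prod, Submodule.mem_bot]
    constructor
    · intro hx
      have h2 : ((B ^ k) x).2 = 0 := by rw [hx]; rfl
      rw [hsnd k x] at h2
      have hx2 : x.2 = 0 := by
        have : ((-lam) ^ k) ≠ 0 := pow_ne_zero _ (neg_ne_zero.mpr hlam)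
        exact (smul_eq_zero.mp h2).resolve_left this
      have hx' : x = (x.1, 0) := by rw [← hx2]
      rw [hx', hfst k x.1] at hx
      exact ⟨(Prod.ext_iff.mp hx).1, hx2⟩
    · rintro ⟨h1, h2⟩
      have hx' : x = (x.1, 0) := by rw [← h2]
      rw [hx', hfst k x.1, h1]; rfl
  refine ⟨fun k _ => hker k, ?_⟩
  -- supremum equality
  apply le_antisymm
  · apply iSup_le
    intro k
    rw [hker k]
    exact Submodule.prod_mono (le_iSup (fun k => LinearMap.ker (C ^ k)) k) le_rfl
  · intro x hx
    rcases Submodule.mem_prod.mp hx with ⟨h1, h2⟩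
    have hmono : Monotone (fun k : ℕ => LinearMap.ker (C ^ k)) := by
      intro i j hij y hy
      simp only [LinearMap.mem_ker] at hy ⊢
      rw [← Nat.sub_add_cancel hij, pow_add, Module.End.mul_apply, hy, map_zero]
    rcases (Submodule.mem_iSup_of_directed _ hmono.directed_le).mp h1 with ⟨k, hk⟩
    refine Submodule.mem_iSup_of_mem k ?_
    rw [hker k]
    exact Submodule.mem_prod.mpr ⟨hk, h2⟩
end

section
/- Let V and W be vector spaces over ℂ, let A : V → V be a bijective linear map and L : W → V a linear map, and define the linear map 𝔸 : V × W → V × W by 𝔸(v, w) := (A v + L w, 0). Then for every k ≥ 2 the kernel of 𝔸ᵏ equals ker(𝔸²), and the generalized eigenspace of 𝔸 at 0 equals {(−A⁻¹(L w), w) : w ∈ W}, which is isomorphic to W. -/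
/-- If `A` is a bijective linear map then for the
parameter-augmented linear map `𝔸(v, w) := (A v + L w, 0)` on `V × W` one has
`ker(𝔸ᵏ) = ker(𝔸²)` for all `k ≥ 2`, and the generalized eigenspace of `𝔸` at `0`
equals `{(−A⁻¹(L w), w) : w ∈ W}`, which is linearly isomorphic to `W`. -/
theorem generalized_kernel_parameter_augmented_at_zero
    {V W : Type*} [AddCommGroup V] [Module ℂ V] [AddCommGroup W] [Module ℂ W]
    (A : V ≃ₗ[ℂ] V) (L : W →ₗ[ℂ] V)
    (𝔸 : V × W →ₗ[ℂ] V × W)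
    (h𝔸 : ∀ (v : V) (w : W), 𝔸 (v, w) = (A v + L w, 0)) :
    (∀ k : ℕ, 2 ≤ k → LinearMap.ker (𝔸 ^ k) = LinearMap.ker (𝔸 ^ 2)) ∧
    ((↑(⨆ k : ℕ, LinearMap.ker (𝔸 ^ k) : Submodule ℂ (V × W)) : Set (V × W))
      = Set.range (fun w : W => ((-(A.symm (L w)) : V), w))) ∧
    Nonempty (↥(⨆ k : ℕ, LinearMap.ker (𝔸 ^ k) : Submodule ℂ (V × W)) ≃ₗ[ℂ] W) := by
  -- `𝔸^k (u, 0) = 0 ↔ u = 0`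
  have key : ∀ (k : ℕ) (u : V), (𝔸 ^ k) (u, 0) = 0 ↔ u = 0 := by
    intro k
    induction k with
    | zero => intro u; simp [Prod.ext_iff]
    | succ k ih =>
      intro u
      have h1 : (𝔸 ^ (k + 1)) (u, 0) = (𝔸 ^ k) (A u, 0) := by
        rw [pow_succ]
        simp [Module.End.mul_apply, h𝔸]
      rw [h1, ih]
      constructor
      · intro h
        have := A.injective (a₂ := 0) (by simpa using h)
        simpa using this
      · intro h; simp [h]
  -- `𝔸 x = (A x.1 + L x.2, 0)`
  have hApp : ∀ x : V × W, 𝔸 x = (A x.1 + L x.2, 0) := fun x => h𝔸 x.1 x.2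
  -- kernel of `𝔸^(k+2)`
  have memk : ∀ (k : ℕ) (x : V × W), (𝔸 ^ (k + 2)) x = 0 ↔ A x.1 + L x.2 = 0 := by
    intro k x
    have h1 : (𝔸 ^ (k + 2)) x = (𝔸 ^ k) ((𝔸 ^ 2) x) := by
      rw [pow_add]; rfl
    have h2 : (𝔸 ^ 2) x = (A (A x.1 + L x.2), 0) := by
      have : (𝔸 ^ 2) x = 𝔸 (𝔸 x) := rfl
      rw [this, hApp x, hApp]
      simp
    rw [h1, h2, key k]
    constructor
    · intro h
      have h' : A (A x.1 + L x.2) = 0 := by simpa [Prod.ext_iff] using h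
      exact A.map_eq_zero_iff.mp h'
    · intro h; simp [h]
  have hker : ∀ k : ℕ, 2 ≤ k → LinearMap.ker (𝔸 ^ k) = LinearMap.ker (𝔸 ^ 2) := by
    intro k hk
    obtain ⟨m, rfl⟩ := Nat.exists_eq_add_of_le hk
    ext x
    simp only [LinearMap.mem_ker]
    rw [show 2 + m = m + 2 by ring, memk m x, memk 0 x]
  -- the supremum equals `ker (𝔸^2)`
  have hsup : (⨆ k : ℕ, LinearMap.ker (𝔸 ^ k)) = LinearMap.ker (𝔸 ^ 2) := by
    apply le_antisymm
    · apply iSup_le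
      intro k
      rcases le_or_gt 2 k with h | h
      · rw [hker k h]
      · intro x hx
        have hx' : (𝔸 ^ k) x = 0 := hx
        have : (𝔸 ^ 2) x = (𝔸 ^ (2 - k)) ((𝔸 ^ k) x) := by
          rw [← Module.End.mul_apply, ← pow_add, Nat.sub_add_cancel h.le]
        simp only [LinearMap.mem_ker, this, hx', map_zero]
    · exact le_iSup (fun k => LinearMap.ker (𝔸 ^ k)) 2
  have hchar : ∀ x : V × W, x ∈ (⨆ k : ℕ, LinearMap.ker (𝔸 ^ k)) ↔
      x.1 = -(A.symm (L x.2)) := by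
    intro x
    rw [hsup]
    simp only [LinearMap.mem_ker]
    rw [memk 0 x]
    constructor
    · intro h
      have : A x.1 = -(L x.2) := eq_neg_of_add_eq_zero_left h
      have := congrArg A.symm this
      simpa using this
    · intro h
      rw [h]
      simp
  refine ⟨hker, ?_, ?_⟩
  · ext x
    simp only [SetLike.mem_coe, hchar, Set.mem_range]
    constructor
    · intro h
      exact ⟨x.2, by rw [← h]⟩
    · rintro ⟨w, rfl⟩
      rfl
  · refine ⟨LinearEquiv.ofBijective
      ((LinearMap.snd ℂ V W).comp (⨆ k : ℕ, LinearMap.ker (𝔸 ^ k)).subtype) ⟨?_, ?_⟩⟩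
    · intro x y hxy
      have hx := (hchar x.1).mp x.2
      have hy := (hchar y.1).mp y.2
      have h2 : (x : V × W).2 = (y : V × W).2 := hxy
      ext
      · rw [hx, hy, h2]
      · exact h2
    · intro w
      refine ⟨⟨(-(A.symm (L w)), w), (hchar _).mpr rfl⟩, rfl⟩
end

section
/- Let g₂₀₀, g₀₁₁, a, g₁₁₁, g₃₀₀, b, c ∈ ℝ with g₂₀₀ ≠ 0. For ε > 0 define z₀(ε) := −(2b + g₁₁₁) ε² / (2 g₂₀₀), β₁(ε) := −g₀₁₁ ε², and β₂(ε) := (a(2b + g₁₁₁) − 2b g₂₀₀) ε² / (2 g₂₀₀). Then, as ε → 0⁺: (i) β₁(ε) + g₂₀₀ z₀(ε)² + g₀₁₁ ε² + g₁₁₁ z₀(ε) ε² + g₃₀₀ z₀(ε)³ = O(ε⁴); (ii) β₂(ε) + a z₀(ε) + c z₀(ε)² + b ε² = O(ε⁴); (iii) the trace [2 g₂₀₀ z₀(ε) + g₁₁₁ ε² + 3 g₃₀₀ z₀(ε)²] + [β₂(ε) + a z₀(ε) + c z₀(ε)² + 3 b ε²] = O(ε⁴); and (iv) the determinant (2 g₂₀₀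 z₀(ε) + g₁₁₁ ε² + 3 g₃₀₀ z₀(ε)²)·(β₂(ε) + a z₀(ε) + c z₀(ε)² + 3 b ε²) − (2 g₀₁₁ ε + 2 g₁₁₁ z₀(ε) ε)·(ε (a + 2 c z₀(ε))) equals −2 a g₀₁₁ ε² + O(ε⁴). -/
open Asymptotics

private lemma aux_bigO (f Q : ℝ → ℝ) (h : ∀ ε : ℝ, f ε = ε ^ 4 * Q ε)
    (hQ : Continuous Q) :
    f =O[nhdsWithin 0 (Set.Ioi 0)] (fun ε : ℝ => ε ^ 4) := by
  have h1 : Q =O[nhdsWithin (0 : ℝ) (Set.Ioi 0)] (fun _ => (1 : ℝ)) :=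
    ((hQ.tendsto 0).mono_left nhdsWithin_le_nhds).isBigO_one ℝ
  have h2 := (isBigO_refl (fun ε : ℝ => ε ^ 4) (nhdsWithin 0 (Set.Ioi 0))).mul h1
  simpa [funext h] using h2

/-- Asymptotic verification of the second-order Neimark–Sacker
predictor at a fold-Hopf point: with `z₀(ε) = −(2b+g₁₁₁)ε²/(2g₂₀₀)`,
`β₁(ε) = −g₀₁₁ε²`, `β₂(ε) = (a(2b+g₁₁₁) − 2bg₂₀₀)ε²/(2g₂₀₀)`, as `ε → 0⁺` both
equilibrium equations of the cubic amplitude system are `O(ε⁴)`, the trace of its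
Jacobian is `O(ε⁴)`, and its determinant equals `−2ag₀₁₁ε² + O(ε⁴)`. -/
theorem foldHopf_NS_predictor_asymptotics
    (g₂₀₀ g₀₁₁ a g₁₁₁ g₃₀₀ b c : ℝ) (hg₂₀₀ : g₂₀₀ ≠ 0)
    (z₀ β₁ β₂ : ℝ → ℝ)
    (hz₀ : ∀ ε : ℝ, z₀ ε = -(2 * b + g₁₁₁) * ε ^ 2 / (2 * g₂₀₀))
    (hβ₁ : ∀ ε : ℝ, β₁ ε = -g₀₁₁ * ε ^ 2)
    (hβ₂ : ∀ ε : ℝ, β₂ ε = (a * (2 * b + g₁₁₁) - 2 * b * g₂₀₀) * ε ^ 2 / (2 * g₂₀₀)) :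
    ((fun ε : ℝ => β₁ ε + g₂₀₀ * z₀ ε ^ 2 + g₀₁₁ * ε ^ 2 + g₁₁₁ * z₀ ε * ε ^ 2
        + g₃₀₀ * z₀ ε ^ 3)
      =O[nhdsWithin 0 (Set.Ioi 0)] (fun ε : ℝ => ε ^ 4)) ∧
    ((fun ε : ℝ => β₂ ε + a * z₀ ε + c * z₀ ε ^ 2 + b * ε ^ 2)
      =O[nhdsWithin 0 (Set.Ioi 0)] (fun ε : ℝ => ε ^ 4)) ∧
    ((fun ε : ℝ => (2 * g₂₀₀ * z₀ ε + g₁₁₁ * ε ^ 2 + 3 * g₃₀₀ * z₀ ε ^ 2)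
        + (β₂ ε + a * z₀ ε + c * z₀ ε ^ 2 + 3 * b * ε ^ 2))
      =O[nhdsWithin 0 (Set.Ioi 0)] (fun ε : ℝ => ε ^ 4)) ∧
    ((fun ε : ℝ =>
        (2 * g₂₀₀ * z₀ ε + g₁₁₁ * ε ^ 2 + 3 * g₃₀₀ * z₀ ε ^ 2)
          * (β₂ ε + a * z₀ ε + c * z₀ ε ^ 2 + 3 * b * ε ^ 2)
        - (2 * g₀₁₁ * ε + 2 * g₁₁₁ * z₀ ε * ε) * (ε * (a + 2 * c * z₀ ε))
        - (-2 * a * g₀₁₁ * ε ^ 2))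
      =O[nhdsWithin 0 (Set.Ioi 0)] (fun ε : ℝ => ε ^ 4)) := by
  obtain ⟨k, hk⟩ : ∃ k : ℝ, k = (2 * b + g₁₁₁) / (2 * g₂₀₀) := ⟨_, rfl⟩
  have h2g : (2 : ℝ) * g₂₀₀ ≠ 0 := by positivity
  have hz : ∀ ε : ℝ, z₀ ε = -(k * ε ^ 2) := by
    intro ε; rw [hz₀ ε, hk]; field_simp
  have hrel : 2 * g₂₀₀ * k = 2 * b + g₁₁₁ := by
    rw [hk]; field_simp
  have hb2 : ∀ ε : ℝ, β₂ ε = (a * k - b) * ε ^ 2 := by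
    intro ε; rw [hβ₂ ε, div_eq_iff h2g]
    linear_combination (-a * ε ^ 2) * hrel
  refine ⟨?_, ?_, ?_, ?_⟩
  · exact aux_bigO _ (fun ε => g₂₀₀ * k ^ 2 - g₁₁₁ * k - g₃₀₀ * k ^ 3 * ε ^ 2)
      (fun ε => by rw [hz ε, hβ₁ ε]; ring) (by continuity)
  · exact aux_bigO _ (fun ε => c * k ^ 2)
      (fun ε => by rw [hz ε, hb2 ε]; ring) (by continuity)
  · exact aux_bigO _ (fun ε => 3 * g₃₀₀ * k ^ 2 + c * k ^ 2)
      (fun ε => by rw [hz ε, hb2 ε]; linear_combination (-ε ^ 2) * hrel) (by continuity)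
  · exact aux_bigO _ (fun ε =>
        (-2 * b + 3 * g₃₀₀ * k ^ 2 * ε ^ 2) * (2 * b + c * k ^ 2 * ε ^ 2)
          + 4 * g₀₁₁ * c * k + 2 * a * g₁₁₁ * k - 4 * g₁₁₁ * c * k ^ 2 * ε ^ 2)
      (fun ε => by rw [hz ε, hb2 ε]
                   linear_combination (-ε ^ 2 * ((a * k - b) * ε ^ 2 + a * -(k * ε ^ 2) + c * (-(k * ε ^ 2)) ^ 2 + 3 * b * ε ^ 2)) * hrel)
      (by continuity)
end

section
/- Let g₂₀₀ > 0, g₀₁₁ > 0, a ∈ ℝ, ε > 0, and σ ∈ {+1, −1}. Define z₀ := σ √(g₀₁₁ / g₂₀₀) ε, β₁ := −2σ √(g₀₁₁ g₂₀₀) ε, and β₂ := −σ a √(g₀₁₁ / g₂₀₀) ε, and let F₁(z₀, ρ) := β₁ z₀ + g₂₀₀ z₀² + g₀₁₁ ρ² and F₂(z₀, ρ) := ρ(β₂ + a z₀). Then F₁(z₀, ε) = 0, F₂(z₀, ε) = 0; moreover both diagonal entries of the Jacobian of (F₁, F₂) at (z₀, ε) vanish, namely β₁ + 2 g₂₀₀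 z₀ = 0 and β₂ + a z₀ = 0, so the trace of the Jacobian is zero, and its determinant equals −2 a g₀₁₁ ε². -/
/-!
At the predictor point the two relations `β₁ = -2 g₂₀₀ z₀` and `β₂ = -a z₀` hold, and
`g₂₀₀ z₀² = g₀₁₁ ε²` because `σ² = 1`. The first two make both diagonal entries of the Jacobian
vanish; with the third, `F₁(z₀, ε) = -g₂₀₀ z₀² + g₀₁₁ ε² = 0`. The determinant of the Jacobian
is then minus the product of its off-diagonal entries `2 g₀₁₁ ε` and `a ε`.
-/

namespace TranscriticalHopf

def amplitude₁ (β₁ g₂₀₀ g₀₁₁ z ρ : ℝ) : ℝ := β₁ * z + g₂₀₀ * z ^ 2 + g₀₁₁ * ρ ^ 2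

def amplitude₂ (β₂ a z ρ : ℝ) : ℝ := ρ * (β₂ + a * z)

section Jacobian

variable (β₁ β₂ g₂₀₀ g₀₁₁ a z ρ : ℝ)

theorem hasDerivAt_amplitude₁_fst :
    HasDerivAt (fun z => amplitude₁ β₁ g₂₀₀ g₀₁₁ z ρ) (β₁ + 2 * g₂₀₀ * z) z := by
  have h := (((hasDerivAt_id' z).const_mul β₁).add
    ((hasDerivAt_pow 2 z).const_mul g₂₀₀)).add_const (g₀₁₁ * ρ ^ 2)
  exact h.congr_deriv (by norm_num; ring)

theorem hasDerivAt_amplitude₁_snd :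
    HasDerivAt (fun ρ => amplitude₁ β₁ g₂₀₀ g₀₁₁ z ρ) (2 * g₀₁₁ * ρ) ρ := by
  have h := ((hasDerivAt_pow 2 ρ).const_mul g₀₁₁).const_add (β₁ * z + g₂₀₀ * z ^ 2)
  exact h.congr_deriv (by norm_num; ring)

theorem hasDerivAt_amplitude₂_fst :
    HasDerivAt (fun z => amplitude₂ β₂ a z ρ) (ρ * a) z := by
  simpa [amplitude₂] using (((hasDerivAt_id z).const_mul a).const_add β₂).const_mul ρ

theorem hasDerivAt_amplitude₂_snd :
    HasDerivAt (fun ρ => amplitude₂ β₂ a z ρ) (β₂ + a * z) ρ := by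
  simpa [amplitude₂] using (hasDerivAt_id ρ).mul_const (β₂ + a * z)

theorem det_jacobian_amplitude :
    Matrix.det
      !![deriv (fun z => amplitude₁ β₁ g₂₀₀ g₀₁₁ z ρ) z,
          deriv (fun ρ => amplitude₁ β₁ g₂₀₀ g₀₁₁ z ρ) ρ;
         deriv (fun z => amplitude₂ β₂ a z ρ) z, deriv (fun ρ => amplitude₂ β₂ a z ρ) ρ]
      = (β₁ + 2 * g₂₀₀ * z) * (β₂ + a * z) - 2 * a * g₀₁₁ * ρ ^ 2 := by
  rw [Matrix.det_fin_two_of, (hasDerivAt_amplitude₁_fst ..).deriv,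
    (hasDerivAt_amplitude₁_snd ..).deriv, (hasDerivAt_amplitude₂_fst ..).deriv,
    (hasDerivAt_amplitude₂_snd ..).deriv]
  ring

end Jacobian

theorem sqrt_mul_eq_sqrt_div_mul {b c : ℝ} (hc : 0 < c) : √(b * c) = √(b / c) * c := by
  rw [show b * c = b / c * c ^ 2 by field_simp, Real.sqrt_mul' _ (sq_nonneg c),
    Real.sqrt_sq hc.le]

theorem mul_sq_predictor {g₂₀₀ g₀₁₁ σ : ℝ} (hg₂₀₀ : 0 < g₂₀₀) (hg₀₁₁ : 0 ≤ g₀₁₁)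
    (hσ : σ ^ 2 = 1) (ε : ℝ) :
    g₂₀₀ * (σ * √(g₀₁₁ / g₂₀₀) * ε) ^ 2 = g₀₁₁ * ε ^ 2 := by
  rw [mul_pow, mul_pow, hσ, Real.sq_sqrt (by positivity)]
  field_simp

end TranscriticalHopf

open TranscriticalHopf in
theorem transcriticalHopf_NS_predictor_general
    (g₂₀₀ g₀₁₁ a ε σ : ℝ)
    (hg₂₀₀ : 0 < g₂₀₀) (hg₀₁₁ : 0 < g₀₁₁)
    (hσ : σ = 1 ∨ σ = -1)
    (z₀ β₁ β₂ : ℝ)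
    (hz₀ : z₀ = σ * Real.sqrt (g₀₁₁ / g₂₀₀) * ε)
    (hβ₁ : β₁ = -2 * σ * Real.sqrt (g₀₁₁ * g₂₀₀) * ε)
    (hβ₂ : β₂ = -σ * a * Real.sqrt (g₀₁₁ / g₂₀₀) * ε)
    (F₁ F₂ : ℝ → ℝ → ℝ)
    (hF₁ : ∀ z ρ : ℝ, F₁ z ρ = β₁ * z + g₂₀₀ * z ^ 2 + g₀₁₁ * ρ ^ 2)
    (hF₂ : ∀ z ρ : ℝ, F₂ z ρ = ρ * (β₂ + a * z)) :
    F₁ z₀ ε = 0 ∧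
    F₂ z₀ ε = 0 ∧
    β₁ + 2 * g₂₀₀ * z₀ = 0 ∧
    β₂ + a * z₀ = 0 ∧
    deriv (fun z => F₁ z ε) z₀ + deriv (fun ρ => F₂ z₀ ρ) ε = 0 ∧
    Matrix.det
      !![deriv (fun z => F₁ z ε) z₀, deriv (fun ρ => F₁ z₀ ρ) ε;
         deriv (fun z => F₂ z ε) z₀, deriv (fun ρ => F₂ z₀ ρ) ε]
      = -2 * a * g₀₁₁ * ε ^ 2 := by
  obtain rfl : F₁ = amplitude₁ β₁ g₂₀₀ g₀₁₁ := funext₂ hF₁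
  obtain rfl : F₂ = amplitude₂ β₂ a := funext₂ hF₂
  have hσ_sq : σ ^ 2 = 1 := by rcases hσ with rfl | rfl <;> norm_num
  have hdiag₁ : β₁ + 2 * g₂₀₀ * z₀ = 0 := by
    rw [hβ₁, hz₀, sqrt_mul_eq_sqrt_div_mul hg₂₀₀]; ring
  have hdiag₂ : β₂ + a * z₀ = 0 := by rw [hβ₂, hz₀]; ring
  have hz₀_sq : g₂₀₀ * z₀ ^ 2 = g₀₁₁ * ε ^ 2 := hz₀ ▸ mul_sq_predictor hg₂₀₀ hg₀₁₁.le hσ_sq ε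
  refine ⟨?_, ?_, hdiag₁, hdiag₂, ?_, ?_⟩
  · simp only [amplitude₁]; linear_combination z₀ * hdiag₁ - hz₀_sq
  · simp only [amplitude₂]; linear_combination ε * hdiag₂
  · rw [(hasDerivAt_amplitude₁_fst ..).deriv, (hasDerivAt_amplitude₂_snd ..).deriv, hdiag₁,
      hdiag₂, add_zero]
  · rw [det_jacobian_amplitude, hdiag₁, hdiag₂]; ring

/-- Neimark–Sacker predictors at a transcritical-Hopf point:
with `z₀ = σ√(g₀₁₁/g₂₀₀)ε`, `β₁ = −2σ√(g₀₁₁g₂₀₀)ε`, `β₂ = −σa√(g₀₁₁/g₂₀₀)ε`,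
the point `(z₀, ε)` is an equilibrium of the quadratic amplitude system, both
diagonal entries `β₁ + 2g₂₀₀z₀` and `β₂ + az₀` of the Jacobian vanish (so its
trace is zero), and its determinant equals `−2ag₀₁₁ε²`. -/
theorem transcriticalHopf_NS_predictor
    (g₂₀₀ g₀₁₁ a ε σ : ℝ)
    (hg₂₀₀ : 0 < g₂₀₀) (hg₀₁₁ : 0 < g₀₁₁) (hε : 0 < ε)
    (hσ : σ = 1 ∨ σ = -1)
    (z₀ β₁ β₂ : ℝ)
    (hz₀ : z₀ = σ * Real.sqrt (g₀₁₁ / g₂₀₀) * ε)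
    (hβ₁ : β₁ = -2 * σ * Real.sqrt (g₀₁₁ * g₂₀₀) * ε)
    (hβ₂ : β₂ = -σ * a * Real.sqrt (g₀₁₁ / g₂₀₀) * ε)
    (F₁ F₂ : ℝ → ℝ → ℝ)
    (hF₁ : ∀ z ρ : ℝ, F₁ z ρ = β₁ * z + g₂₀₀ * z ^ 2 + g₀₁₁ * ρ ^ 2)
    (hF₂ : ∀ z ρ : ℝ, F₂ z ρ = ρ * (β₂ + a * z)) :
    F₁ z₀ ε = 0 ∧
    F₂ z₀ ε = 0 ∧
    β₁ + 2 * g₂₀₀ * z₀ = 0 ∧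
    β₂ + a * z₀ = 0 ∧
    deriv (fun z => F₁ z ε) z₀ + deriv (fun ρ => F₂ z₀ ρ) ε = 0 ∧
    Matrix.det
      !![deriv (fun z => F₁ z ε) z₀, deriv (fun ρ => F₁ z₀ ρ) ε;
         deriv (fun z => F₂ z ε) z₀, deriv (fun ρ => F₂ z₀ ρ) ε]
      = -2 * a * g₀₁₁ * ε ^ 2 :=
  transcriticalHopf_NS_predictor_general g₂₀₀ g₀₁₁ a ε σ hg₂₀₀ hg₀₁₁ hσ z₀ β₁ β₂ hz₀ hβ₁ hβ₂ F₁ F₂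
    hF₁ hF₂
end
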